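/- arXiv:2501.05184 — 8 statements merged into one kernel-verified Lean document; each statement's English description precedes it below -/
import Mathlib

section
/- Let x ∈ ℝⁿ have all entries nonzero, let p ∈ ℝ, and let y be a random vector in ℝⁿ (on a probability space, with each y_i square-integrable) satisfying E[y_i²] = υ for all i and with ⟨x,y⟩² integrable. For i ∼ D_x^{(p)} define Z(i) := sgn(x_i)|x_i|^{1−p} y_i. Then the expectation over y of the variance of ‖x‖_p^p·Z(i) equals υ·(Σ_{i=1}^n |x_i|^p)(Σ_{i=1}^n |x_i|^{2−p}) − E_y[⟨x,y⟩²]. -/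
open Finset MeasureTheory

/-- Average (over a random input `y` with equal second moments) of the variance
of the rescaled importance-sampling estimator `‖x‖_p^p · Z(i)`. -/
theorem stmt_2 {n : ℕ} (x : Fin n → ℝ) (hx : ∀ i, x i ≠ 0) (p : ℝ)
    {Ω : Type*} [MeasurableSpace Ω] (μ : Measure Ω) [IsProbabilityMeasure μ]
    (y : Ω → Fin n → ℝ) (υ : ℝ)
    (hmeas : ∀ i, Measurable fun ω => y ω i)
    (hy2int : ∀ i, Integrable (fun ω => (y ω i) ^ 2) μ)
    (hy2 : ∀ i, ∫ ω, (y ω i) ^ 2 ∂μ = υ)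
    (hxyint : Integrable (fun ω => (∑ i, x i * y ω i) ^ 2) μ) :
    ∫ ω,
        ((∑ i, (|x i| ^ p / (∑ k, |x k| ^ p)) *
            ((∑ k, |x k| ^ p) * (Real.sign (x i) * |x i| ^ (1 - p) * y ω i)) ^ 2)
          - (∑ i, (|x i| ^ p / (∑ k, |x k| ^ p)) *
              ((∑ k, |x k| ^ p) * (Real.sign (x i) * |x i| ^ (1 - p) * y ω i))) ^ 2) ∂μ
      = υ * (∑ i, |x i| ^ p) * (∑ i, |x i| ^ (2 - p))
          - ∫ ω, (∑ i, x i * y ω i) ^ 2 ∂μ := by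
  rcases Nat.eq_zero_or_pos n with h0 | hn
  · subst h0
    simp
  set S : ℝ := ∑ k, |x k| ^ p with hS
  have hxpos : ∀ i, (0:ℝ) < |x i| := fun i => abs_pos.mpr (hx i)
  have hS0 : 0 < S := Finset.sum_pos (fun k _ => Real.rpow_pos_of_pos (hxpos k) p)
    (Finset.univ_nonempty_iff.mpr ⟨⟨0, hn⟩⟩)
  have hsgn2 : ∀ i, Real.sign (x i) ^ 2 = 1 := by
    intro i
    rcases lt_or_gt_of_ne (hx i) with h | h
    · simp [Real.sign_of_neg h]
    · simp [Real.sign_of_pos h]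
  have hsgnabs : ∀ i, Real.sign (x i) * |x i| = x i := by
    intro i
    rcases lt_or_gt_of_ne (hx i) with h | h
    · rw [Real.sign_of_neg h, abs_of_neg h]; ring
    · rw [Real.sign_of_pos h, abs_of_pos h]; ring
  -- pointwise simplification
  have key : ∀ ω,
      ((∑ i, (|x i| ^ p / S) * (S * (Real.sign (x i) * |x i| ^ (1 - p) * y ω i)) ^ 2)
        - (∑ i, (|x i| ^ p / S) * (S * (Real.sign (x i) * |x i| ^ (1 - p) * y ω i))) ^ 2)
      = (∑ i, S * |x i| ^ (2 - p) * (y ω i) ^ 2) - (∑ i, x i * y ω i) ^ 2 := by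
    intro ω
    have h1 : ∀ i, (|x i| ^ p / S) * (S * (Real.sign (x i) * |x i| ^ (1 - p) * y ω i)) ^ 2
        = S * |x i| ^ (2 - p) * (y ω i) ^ 2 := by
      intro i
      have hab : |x i| ^ p * (|x i| ^ (1 - p)) ^ 2 = |x i| ^ (2 - p) := by
        rw [← Real.rpow_natCast (|x i| ^ (1 - p)) 2, ← Real.rpow_mul (abs_nonneg _),
          ← Real.rpow_add (hxpos i)]
        congr 1; ring
      have e : (S * (Real.sign (x i) * |x i| ^ (1 - p) * y ω i)) ^ 2
          = Real.sign (x i) ^ 2 * (S ^ 2 * ((|x i| ^ (1 - p)) ^ 2 * y ω i ^ 2)) := by ring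
      rw [e, hsgn2, one_mul, ← hab]
      field_simp
    have h2 : ∀ i, (|x i| ^ p / S) * (S * (Real.sign (x i) * |x i| ^ (1 - p) * y ω i))
        = x i * y ω i := by
      intro i
      have hab : |x i| ^ p * |x i| ^ (1 - p) = |x i| := by
        rw [← Real.rpow_add (hxpos i), show p + (1 - p) = 1 by ring, Real.rpow_one]
      have e : |x i| ^ p / S * (S * (Real.sign (x i) * |x i| ^ (1 - p) * y ω i))
          = Real.sign (x i) * (|x i| ^ p * |x i| ^ (1 - p)) * y ω i * (S / S) := by ring
      rw [e, hab, div_self hS0.ne', mul_one, hsgnabs]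
    rw [Finset.sum_congr rfl (fun i _ => h1 i), Finset.sum_congr rfl (fun i _ => h2 i)]
  simp_rw [key]
  have hint1 : Integrable (fun ω => ∑ i, S * |x i| ^ (2 - p) * (y ω i) ^ 2) μ :=
    integrable_finset_sum _ (fun i _ => ((hy2int i).const_mul _))
  rw [integral_sub hint1 hxyint, integral_finset_sum _ (fun i _ => ((hy2int i).const_mul _))]
  have : ∀ i, ∫ ω, S * |x i| ^ (2 - p) * (y ω i) ^ 2 ∂μ = S * |x i| ^ (2 - p) * υ := by
    intro i
    rw [integral_const_mul, hy2]
  rw [Finset.sum_congr rfl (fun i _ => this i)]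
  have hfin : ∑ i, S * |x i| ^ (2 - p) * υ = υ * S * ∑ i, |x i| ^ (2 - p) := by
    rw [← Finset.sum_mul, ← Finset.mul_sum]; ring
  rw [hfin]
end

section
/- Let x ∈ ℝⁿ have all entries nonzero, and let y be a random vector in ℝⁿ (each y_i square-integrable) with E[y_i²] = υ for all i and ⟨x,y⟩² integrable. Then the map p ↦ E_y[Var_{i∼D_x^{(p)}}(‖x‖_p^p·Z_p(i))], where Z_p(i) := sgn(x_i)|x_i|^{1−p} y_i, attains its minimum over p ∈ ℝ at p = 1; i.e., for every p ∈ ℝ, E_y[Var_{i∼D_x^{(p)}}(‖x‖_p^p Z_p(i))] ≥ E_y[Var_{i∼D_x^{(1)}}(‖x‖_1 Z_1(i))]. -/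
open Finset MeasureTheory

/-!
Writing `S_p = ∑ |x_k|^p`, the estimator `S_p Z_p(i)` is unbiased for `⟨x, y⟩` and its second
moment is `S_p ∑ |x_i|^(2-p) y_i²`. Averaging over `y` with `E[y_i²] = υ` turns the expected
variance into `S_p (∑ |x_i|^(2-p)) υ - E⟨x, y⟩²`, and by Cauchy–Schwarz (pairing `|x_i|^(p/2)`
with `|x_i|^(1-p/2)`) the factor `S_p ∑ |x_i|^(2-p)` is at least `(∑ |x_i|)²`, its value at `p = 1`.
-/

namespace Real

theorem sign_mul_abs (x : ℝ) : sign x * |x| = x := by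
  rcases lt_trichotomy x 0 with h | rfl | h
  · rw [sign_of_neg h, abs_of_neg h]; ring
  · simp
  · rw [sign_of_pos h, abs_of_pos h]; ring

theorem sign_sq_of_ne_zero {x : ℝ} (hx : x ≠ 0) : sign x ^ 2 = 1 := by
  rcases sign_apply_eq_of_ne_zero x hx with h | h <;> rw [h] <;> norm_num

theorem abs_rpow_mul_sign_mul_abs_rpow_one_sub (x p : ℝ) :
    |x| ^ p * (sign x * |x| ^ (1 - p)) = x := by
  rw [mul_left_comm, ← rpow_add' (abs_nonneg x) (by norm_num), add_sub_cancel, rpow_one,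
    sign_mul_abs]

theorem abs_rpow_mul_sign_mul_abs_rpow_one_sub_sq {x : ℝ} (hx : x ≠ 0) (p : ℝ) :
    |x| ^ p * (sign x * |x| ^ (1 - p)) ^ 2 = |x| ^ (2 - p) := by
  have hx' : 0 < |x| := abs_pos.2 hx
  rw [mul_pow, sign_sq_of_ne_zero hx, one_mul, ← rpow_natCast, ← rpow_mul hx'.le,
    ← rpow_add hx']
  congr 1
  push_cast
  ring

end Real

theorem sq_sum_le_sum_rpow_mul_sum_rpow {ι : Type*} (s : Finset ι) {a : ι → ℝ}
    (ha : ∀ i ∈ s, 0 ≤ a i) (p : ℝ) :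
    (∑ i ∈ s, a i) ^ 2 ≤ (∑ i ∈ s, a i ^ p) * ∑ i ∈ s, a i ^ (2 - p) :=
  sum_sq_le_sum_mul_sum_of_sq_le_mul s (fun i hi => Real.rpow_nonneg (ha i hi) _)
    (fun i hi => Real.rpow_nonneg (ha i hi) _) fun i hi => by
      rw [← Real.rpow_add' (ha i hi) (by norm_num), add_sub_cancel, Real.rpow_two]

section ImportanceSampling

variable {ι : Type*} [Fintype ι] [Nonempty ι] {x : ι → ℝ}

theorem sum_abs_rpow_pos (hx : ∀ i, x i ≠ 0) (p : ℝ) : 0 < ∑ k, |x k| ^ p :=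
  sum_pos (fun i _ => Real.rpow_pos_of_pos (abs_pos.2 (hx i)) p) univ_nonempty

theorem importanceSampling_mean_eq (hx : ∀ i, x i ≠ 0) (c : ι → ℝ) (p : ℝ) :
    ∑ i, (|x i| ^ p / ∑ k, |x k| ^ p) *
        ((∑ k, |x k| ^ p) * (Real.sign (x i) * |x i| ^ (1 - p) * c i)) =
      ∑ i, x i * c i := by
  have hS := (sum_abs_rpow_pos hx p).ne'
  refine sum_congr rfl fun i _ => ?_
  field_simp
  linear_combination c i * Real.abs_rpow_mul_sign_mul_abs_rpow_one_sub (x i) p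

theorem importanceSampling_sq_mean_eq (hx : ∀ i, x i ≠ 0) (c : ι → ℝ) (p : ℝ) :
    ∑ i, (|x i| ^ p / ∑ k, |x k| ^ p) *
        ((∑ k, |x k| ^ p) * (Real.sign (x i) * |x i| ^ (1 - p) * c i)) ^ 2 =
      (∑ k, |x k| ^ p) * ∑ i, |x i| ^ (2 - p) * c i ^ 2 := by
  have hS := (sum_abs_rpow_pos hx p).ne'
  rw [mul_sum]
  refine sum_congr rfl fun i _ => ?_
  rw [← Real.abs_rpow_mul_sign_mul_abs_rpow_one_sub_sq (hx i) p]
  field_simp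

theorem integral_importanceSampling_variance_eq (hx : ∀ i, x i ≠ 0)
    {Ω : Type*} [MeasurableSpace Ω] (μ : Measure Ω) (y : Ω → ι → ℝ) (υ : ℝ)
    (hy2int : ∀ i, Integrable (fun ω => (y ω i) ^ 2) μ)
    (hy2 : ∀ i, ∫ ω, (y ω i) ^ 2 ∂μ = υ)
    (hxyint : Integrable (fun ω => (∑ i, x i * y ω i) ^ 2) μ) (p : ℝ) :
    ∫ ω,
        ((∑ i, (|x i| ^ p / (∑ k, |x k| ^ p)) *
            ((∑ k, |x k| ^ p) * (Real.sign (x i) * |x i| ^ (1 - p) * y ω i)) ^ 2)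
          - (∑ i, (|x i| ^ p / (∑ k, |x k| ^ p)) *
              ((∑ k, |x k| ^ p) * (Real.sign (x i) * |x i| ^ (1 - p) * y ω i))) ^ 2) ∂μ =
      (∑ k, |x k| ^ p) * (∑ i, |x i| ^ (2 - p)) * υ - ∫ ω, (∑ i, x i * y ω i) ^ 2 ∂μ := by
  have hterm : ∀ i, Integrable (fun ω => |x i| ^ (2 - p) * y ω i ^ 2) μ :=
    fun i => (hy2int i).const_mul _
  simp_rw [importanceSampling_sq_mean_eq hx, importanceSampling_mean_eq hx]
  rw [integral_sub ((integrable_finsetSum _ fun i _ => hterm i).const_mul _) hxyint,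
    integral_const_mul, integral_finsetSum _ fun i _ => hterm i]
  simp_rw [integral_const_mul, hy2, ← sum_mul, mul_assoc]

end ImportanceSampling

theorem stmt_3_general {n : ℕ} (x : Fin n → ℝ) (hx : ∀ i, x i ≠ 0)
    {Ω : Type*} [MeasurableSpace Ω] (μ : Measure Ω) [IsProbabilityMeasure μ]
    (y : Ω → Fin n → ℝ) (υ : ℝ)
    (hy2int : ∀ i, Integrable (fun ω => (y ω i) ^ 2) μ)
    (hy2 : ∀ i, ∫ ω, (y ω i) ^ 2 ∂μ = υ)
    (hxyint : Integrable (fun ω => (∑ i, x i * y ω i) ^ 2) μ)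
    (p : ℝ) :
    ∫ ω,
        ((∑ i, (|x i| ^ p / (∑ k, |x k| ^ p)) *
            ((∑ k, |x k| ^ p) * (Real.sign (x i) * |x i| ^ (1 - p) * y ω i)) ^ 2)
          - (∑ i, (|x i| ^ p / (∑ k, |x k| ^ p)) *
              ((∑ k, |x k| ^ p) * (Real.sign (x i) * |x i| ^ (1 - p) * y ω i))) ^ 2) ∂μ
      ≥ ∫ ω,
          ((∑ i, (|x i| ^ (1 : ℝ) / (∑ k, |x k| ^ (1 : ℝ))) *
              ((∑ k, |x k| ^ (1 : ℝ)) *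
                (Real.sign (x i) * |x i| ^ (1 - (1 : ℝ)) * y ω i)) ^ 2)
            - (∑ i, (|x i| ^ (1 : ℝ) / (∑ k, |x k| ^ (1 : ℝ))) *
                ((∑ k, |x k| ^ (1 : ℝ)) *
                  (Real.sign (x i) * |x i| ^ (1 - (1 : ℝ)) * y ω i))) ^ 2) ∂μ := by
  cases isEmpty_or_nonempty (Fin n)
  · simp
  rw [integral_importanceSampling_variance_eq hx μ y υ hy2int hy2 hxyint,
    integral_importanceSampling_variance_eq hx μ y υ hy2int hy2 hxyint]
  have hυ : 0 ≤ υ := hy2 (Classical.arbitrary _) ▸ integral_nonneg fun _ => sq_nonneg _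
  have hcs := sq_sum_le_sum_rpow_mul_sum_rpow univ (fun i _ => abs_nonneg (x i)) p
  norm_num only [Real.rpow_one] at hcs ⊢
  rw [← sq]
  gcongr

/-- The average (over `y`) variance of the rescaled importance-sampling estimator
`‖x‖_p^p · Z_p(i)` is minimized at `p = 1` when the entries of `y` have equal
second-order moments. -/
theorem stmt_3 {n : ℕ} (x : Fin n → ℝ) (hx : ∀ i, x i ≠ 0)
    {Ω : Type*} [MeasurableSpace Ω] (μ : Measure Ω) [IsProbabilityMeasure μ]
    (y : Ω → Fin n → ℝ) (υ : ℝ)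
    (hmeas : ∀ i, Measurable fun ω => y ω i)
    (hy2int : ∀ i, Integrable (fun ω => (y ω i) ^ 2) μ)
    (hy2 : ∀ i, ∫ ω, (y ω i) ^ 2 ∂μ = υ)
    (hxyint : Integrable (fun ω => (∑ i, x i * y ω i) ^ 2) μ)
    (p : ℝ) :
    ∫ ω,
        ((∑ i, (|x i| ^ p / (∑ k, |x k| ^ p)) *
            ((∑ k, |x k| ^ p) * (Real.sign (x i) * |x i| ^ (1 - p) * y ω i)) ^ 2)
          - (∑ i, (|x i| ^ p / (∑ k, |x k| ^ p)) *
              ((∑ k, |x k| ^ p) * (Real.sign (x i) * |x i| ^ (1 - p) * y ω i))) ^ 2) ∂μ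
      ≥ ∫ ω,
          ((∑ i, (|x i| ^ (1 : ℝ) / (∑ k, |x k| ^ (1 : ℝ))) *
              ((∑ k, |x k| ^ (1 : ℝ)) *
                (Real.sign (x i) * |x i| ^ (1 - (1 : ℝ)) * y ω i)) ^ 2)
            - (∑ i, (|x i| ^ (1 : ℝ) / (∑ k, |x k| ^ (1 : ℝ))) *
                ((∑ k, |x k| ^ (1 : ℝ)) *
                  (Real.sign (x i) * |x i| ^ (1 - (1 : ℝ)) * y ω i))) ^ 2) ∂μ :=
  stmt_3_general x hx μ y υ hy2int hy2 hxyint p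
end

section
/- Let x_1,…,x_n, y_1,…,y_n be 2n jointly independent and identically distributed real random variables with zero mean and E[x_1²] = υ (square-integrable, with |x_1| integrable). Then E[υ·n·Σ_{i=1}^n x_i² − (Σ_{i=1}^n x_i y_i)²] = n(n−1)υ², and E[υ·(Σ_{i=1}^n |x_i|)² − (Σ_{i=1}^n x_i y_i)²] = n(n−1)·υ·(E[|x_1|])². -/
open Finset MeasureTheory ProbabilityTheory

/-!
For pairwise independent square-integrable `f i`, `E[(∑ f i)²] = ∑ Var[f i] + (∑ E[f i])²`.
The products `x_i y_i` involve disjoint sets of the independent variables, so they are pairwise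
independent, centred, with variance `υ²`: hence `E[(∑ x_i y_i)²] = n υ²`. The `|x_i|` are pairwise
independent with variance `υ - (E|x_1|)²`, hence `E[(∑ |x_i|)²] = n υ + n (n - 1) (E|x_1|)²`.
-/

namespace ProbabilityTheory

variable {Ω : Type*} [MeasurableSpace Ω] {μ : Measure Ω}

lemma IndepFun.sq {f g : Ω → ℝ} (h : f ⟂ᵢ[μ] g) :
    (fun ω => f ω ^ 2) ⟂ᵢ[μ] fun ω => g ω ^ 2 :=
  h.comp (measurable_id.pow_const 2) (measurable_id.pow_const 2)

lemma IndepFun.memLp_two_mul {f g : Ω → ℝ} (h : f ⟂ᵢ[μ] g) (hf : MemLp f 2 μ)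
    (hg : MemLp g 2 μ) : MemLp (f * g) 2 μ := by
  refine (memLp_two_iff_integrable_sq
    (hf.aestronglyMeasurable.mul hg.aestronglyMeasurable)).2 ?_
  simpa only [Pi.mul_def, Pi.mul_apply, mul_pow] using
    h.sq.integrable_mul hf.integrable_sq hg.integrable_sq

variable [IsProbabilityMeasure μ]

lemma IndepFun.variance_mul {f g : Ω → ℝ} (h : f ⟂ᵢ[μ] g) (hf : MemLp f 2 μ)
    (hg : MemLp g 2 μ) :
    Var[f * g; μ] = (∫ ω, f ω ^ 2 ∂μ) * (∫ ω, g ω ^ 2 ∂μ) - (μ[f] * μ[g]) ^ 2 := by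
  rw [variance_eq_sub (h.memLp_two_mul hf hg), ← h.sq.integral_fun_mul_eq_mul_integral
      (hf.aestronglyMeasurable.pow 2) (hg.aestronglyMeasurable.pow 2),
    h.integral_mul_eq_mul_integral hf.aestronglyMeasurable hg.aestronglyMeasurable]
  simp only [Pi.pow_apply, Pi.mul_apply, mul_pow]

lemma IndepFun.integral_sq_sum {ι : Type*} {s : Finset ι} {f : ι → Ω → ℝ}
    (hf : ∀ i ∈ s, MemLp (f i) 2 μ) (h : (s : Set ι).Pairwise fun i j => f i ⟂ᵢ[μ] f j) :
    ∫ ω, (∑ i ∈ s, f i ω) ^ 2 ∂μ = ∑ i ∈ s, Var[f i; μ] + (∑ i ∈ s, μ[f i]) ^ 2 := by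
  have hvar := variance_eq_sub (memLp_finsetSum' s hf)
  simp only [IndepFun.variance_sum hf h, Pi.pow_apply, Finset.sum_apply] at hvar
  rw [hvar, integral_finsetSum s fun i hi => (hf i hi).integrable one_le_two]
  ring

lemma IndepFun.integral_sq_sum_abs {ι : Type*} {s : Finset ι} {f : ι → Ω → ℝ}
    (hf : ∀ i ∈ s, MemLp (f i) 2 μ) (h : (s : Set ι).Pairwise fun i j => f i ⟂ᵢ[μ] f j) :
    ∫ ω, (∑ i ∈ s, |f i ω|) ^ 2 ∂μ =
      ∑ i ∈ s, (∫ ω, f i ω ^ 2 ∂μ - (∫ ω, |f i ω| ∂μ) ^ 2) + (∑ i ∈ s, ∫ ω, |f i ω| ∂μ) ^ 2 := by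
  rw [IndepFun.integral_sq_sum (f := fun i ω => |f i ω|) (fun i hi => (hf i hi).abs)
    fun i hi j hj hij => (h hi hj hij).comp measurable_abs measurable_abs]
  congr 1
  refine sum_congr rfl fun i hi => ?_
  rw [variance_eq_sub (X := fun ω => |f i ω|) (hf i hi).abs]
  simp only [Pi.pow_apply, sq_abs]

lemma iIndepFun.integral_sq_sum_mul {ι : Type*} [Fintype ι] {X Y : ι → Ω → ℝ}
    (h : iIndepFun (Sum.elim X Y) μ) (hX : ∀ i, MemLp (X i) 2 μ) (hY : ∀ i, MemLp (Y i) 2 μ)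
    (hXmean : ∀ i, μ[X i] = 0) :
    ∫ ω, (∑ i, X i ω * Y i ω) ^ 2 ∂μ = ∑ i, (∫ ω, X i ω ^ 2 ∂μ) * ∫ ω, Y i ω ^ 2 ∂μ := by
  have hXY (i : ι) : X i ⟂ᵢ[μ] Y i := h.indepFun Sum.inl_ne_inr
  have hmeas : ∀ k, AEMeasurable (Sum.elim X Y k) μ :=
    Sum.forall.2 ⟨fun i => (hX i).aemeasurable, fun i => (hY i).aemeasurable⟩
  have hpair : ((univ : Finset ι) : Set ι).Pairwise fun i j => (X i * Y i) ⟂ᵢ[μ] (X j * Y j) :=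
    fun i _ j _ hij => h.indepFun_mul_mul₀ hmeas (.inl i) (.inr i) (.inl j) (.inr j)
      (by simpa) (by simp) (by simp) (by simpa)
  have hmeanXY (i : ι) : ∫ ω, X i ω * Y i ω ∂μ = 0 := by
    rw [(hXY i).integral_fun_mul_eq_mul_integral (hX i).aestronglyMeasurable
      (hY i).aestronglyMeasurable, hXmean, zero_mul]
  have hsum := IndepFun.integral_sq_sum (fun i _ => (hXY i).memLp_two_mul (hX i) (hY i)) hpair
  simp only [Pi.mul_apply] at hsum
  simp [hsum, fun i => (hXY i).variance_mul (hX i) (hY i), hXmean, hmeanXY]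

end ProbabilityTheory

theorem stmt_5_general {Ω : Type*} [MeasurableSpace Ω] (μ : Measure Ω) [IsProbabilityMeasure μ]
    {n : ℕ} [NeZero n] (X Y : Fin n → Ω → ℝ) (υ : ℝ)
    (hindep : iIndepFun (Sum.elim X Y) μ)
    (hident : ∀ k : Fin n ⊕ Fin n, IdentDistrib (Sum.elim X Y k) (X 0) μ μ)
    (hL2 : MemLp (X 0) 2 μ)
    (hmean : ∫ ω, X 0 ω ∂μ = 0) (hmom2 : ∫ ω, (X 0 ω) ^ 2 ∂μ = υ) :
    (∫ ω, (υ * n * ∑ i, (X i ω) ^ 2 - (∑ i, X i ω * Y i ω) ^ 2) ∂μ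
        = (n : ℝ) * ((n : ℝ) - 1) * υ ^ 2) ∧
    (∫ ω, (υ * (∑ i, |X i ω|) ^ 2 - (∑ i, X i ω * Y i ω) ^ 2) ∂μ
        = (n : ℝ) * ((n : ℝ) - 1) * υ * (∫ ω, |X 0 ω| ∂μ) ^ 2) := by
  have hmem (k : Fin n ⊕ Fin n) : MemLp (Sum.elim X Y k) 2 μ := (hident k).symm.memLp_snd hL2
  have hsq (k : Fin n ⊕ Fin n) : ∫ ω, Sum.elim X Y k ω ^ 2 ∂μ = υ :=
    ((hident k).comp (measurable_id.pow_const 2)).integral_eq.trans hmom2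
  have hX (i : Fin n) : MemLp (X i) 2 μ := hmem (.inl i)
  have hsqX (i : Fin n) : ∫ ω, X i ω ^ 2 ∂μ = υ := hsq (.inl i)
  have hsqY (i : Fin n) : ∫ ω, Y i ω ^ 2 ∂μ = υ := hsq (.inr i)
  have habsX (i : Fin n) : ∫ ω, |X i ω| ∂μ = ∫ ω, |X 0 ω| ∂μ :=
    ((hident (.inl i)).comp measurable_abs).integral_eq
  have hProd : ∫ ω, (∑ i, X i ω * Y i ω) ^ 2 ∂μ = n * υ ^ 2 := by
    rw [hindep.integral_sq_sum_mul hX (fun i => hmem (.inr i))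
      fun i => (hident (.inl i)).integral_eq.trans hmean]
    simp only [hsqX, hsqY, sum_const, card_univ, Fintype.card_fin, nsmul_eq_mul]
    ring
  have hSumSq : ∫ ω, ∑ i, X i ω ^ 2 ∂μ = n * υ := by
    simp [integral_finsetSum _ fun i _ => (hX i).integrable_sq, hsqX]
  have hSumAbs : ∫ ω, (∑ i, |X i ω|) ^ 2 ∂μ =
      n * (υ - (∫ ω, |X 0 ω| ∂μ) ^ 2) + (n * ∫ ω, |X 0 ω| ∂μ) ^ 2 := by
    simp only [IndepFun.integral_sq_sum_abs (fun i _ => hX i)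
      fun i _ j _ hij => hindep.indepFun (Sum.inl_injective.ne hij), hsqX, habsX, sum_const,
      card_univ, Fintype.card_fin, nsmul_eq_mul]
  have hProdInt : Integrable (fun ω => (∑ i, X i ω * Y i ω) ^ 2) μ :=
    (memLp_finsetSum univ fun i _ =>
      (hindep.indepFun Sum.inl_ne_inr).memLp_two_mul (hX i) (hmem (.inr i))).integrable_sq
  have hSumSqInt : Integrable (fun ω => ∑ i, X i ω ^ 2) μ :=
    integrable_finsetSum univ fun i _ => (hX i).integrable_sq
  have hSumAbsInt : Integrable (fun ω => (∑ i, |X i ω|) ^ 2) μ :=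
    (memLp_finsetSum univ fun i _ => (hX i).abs).integrable_sq
  constructor
  · rw [integral_sub (hSumSqInt.const_mul _) hProdInt, integral_const_mul, hSumSq, hProd]
    ring
  · rw [integral_sub (hSumAbsInt.const_mul _) hProdInt, integral_const_mul, hSumAbs, hProd]
    ring

/-- Average variances of the importance-sampling inner-product estimator for the
`L²` (`p = 2`) and `L¹` (`p = 1`) data structures, for i.i.d. zero-mean entries. -/
theorem stmt_5 {Ω : Type*} [MeasurableSpace Ω] (μ : Measure Ω) [IsProbabilityMeasure μ]
    {n : ℕ} [NeZero n] (X Y : Fin n → Ω → ℝ) (υ : ℝ)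
    (hmX : ∀ i, Measurable (X i)) (hmY : ∀ i, Measurable (Y i))
    (hindep : iIndepFun (Sum.elim X Y) μ)
    (hident : ∀ k : Fin n ⊕ Fin n, IdentDistrib (Sum.elim X Y k) (X 0) μ μ)
    (hL2 : MemLp (X 0) 2 μ) (habs : Integrable (fun ω => |X 0 ω|) μ)
    (hmean : ∫ ω, X 0 ω ∂μ = 0) (hmom2 : ∫ ω, (X 0 ω) ^ 2 ∂μ = υ) :
    (∫ ω, (υ * n * ∑ i, (X i ω) ^ 2 - (∑ i, X i ω * Y i ω) ^ 2) ∂μ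
        = (n : ℝ) * ((n : ℝ) - 1) * υ ^ 2) ∧
    (∫ ω, (υ * (∑ i, |X i ω|) ^ 2 - (∑ i, X i ω * Y i ω) ^ 2) ∂μ
        = (n : ℝ) * ((n : ℝ) - 1) * υ * (∫ ω, |X 0 ω| ∂μ) ^ 2) :=
  stmt_5_general μ X Y υ hindep hident hL2 hmean hmom2
end

section
/- Let x_1,…,x_n, y_1,…,y_n be 2n jointly independent real random variables, each distributed as the Gaussian N(0, σ²) with σ > 0 and n ≥ 2. Then E[σ²·n·Σ_{i=1}^n x_i² − (Σ_{i=1}^n x_i y_i)²] = (π/2)·E[σ²·(Σ_{i=1}^n |x_i|)² − (Σ_{i=1}^n x_i y_i)²]; i.e., replacing the L² data structure with the L¹ data structure improves the average sample efficiency of inner product estimation by a factor of π/2. -/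
open Finset MeasureTheory ProbabilityTheory Real

open scoped NNReal ENNReal

/-!
Expanding the squares, both expectations reduce to second moments. With `v = σ²`,
`E[(Σ xᵢyᵢ)²] = n v²` since the products `xᵢyᵢ` are centred and pairwise independent, so the
`L²` side is `n² v² - n v² = n(n-1) v²`. For the `L¹` side,
`E[(Σ |xᵢ|)²] = n v + n(n-1) (E|x₁|)²` and the Gaussian absolute moment `E|x₁| = √(2v/π)` gives
`v (n v + n(n-1) 2v/π) - n v² = n(n-1) v² · 2/π`.
-/

lemma integral_Ioi_mul_exp_neg_mul_sq {b : ℝ} (hb : 0 < b) :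
    ∫ x in Set.Ioi 0, x * exp (-b * x ^ 2) = (2 * b)⁻¹ := by
  have h := integral_rpow_mul_exp_neg_mul_rpow (p := 2) (q := 1) two_pos (by norm_num) hb
  simp only [rpow_one, rpow_ofNat, add_self_div_two, Gamma_one, mul_one] at h
  rw [h, show (-(1 + 1) / 2 : ℝ) = -1 by norm_num, rpow_neg_one]
  ring

lemma integral_sq_gaussianReal (v : ℝ≥0) : ∫ x, x ^ 2 ∂gaussianReal 0 v = v := by
  rw [← variance_of_integral_eq_zero aemeasurable_id' integral_id_gaussianReal]
  exact variance_fun_id_gaussianReal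

lemma integral_abs_gaussianReal (v : ℝ≥0) :
    ∫ x, |x| ∂gaussianReal 0 v = √(2 * v / π) := by
  rcases eq_or_ne v 0 with rfl | hv
  · simp [gaussianReal_zero_var]
  have hv' : (0 : ℝ) < v := by positivity
  have hpdf : ∀ x, gaussianPDFReal 0 v x • |x|
      = (√(2 * π * v))⁻¹ * (|x| * exp (-(2 * (v : ℝ))⁻¹ * |x| ^ 2)) := fun x => by
    rw [gaussianPDFReal, smul_eq_mul, sq_abs]
    ring_nf
  rw [integral_gaussianReal_eq_integral_smul hv, integral_congr_ae (.of_forall hpdf),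
    integral_const_mul, integral_comp_abs (f := fun x => x * exp (-(2 * (v : ℝ))⁻¹ * x ^ 2)),
    integral_Ioi_mul_exp_neg_mul_sq (by positivity),
    show 2 * (v : ℝ) / π = (2 * v) ^ 2 / (2 * π * v) by field_simp, sqrt_div (sq_nonneg _),
    sqrt_sq (by positivity)]
  field_simp

instance : ENNReal.HolderTriple 4 4 2 where
  inv_add_inv_eq_inv := by
    rw [← two_mul, show (4 : ℝ≥0∞) = 2 * 2 by norm_num, ENNReal.mul_inv (by simp) (by simp),
      ← mul_assoc, ENNReal.mul_inv_cancel (by simp) (by simp), one_mul]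

namespace ProbabilityTheory.HasLaw

variable {Ω : Type*} [MeasurableSpace Ω] {P : Measure Ω} {X Y : Ω → ℝ} {m m' : ℝ} {v w : ℝ≥0}

lemma memLp_of_gaussianReal (hX : HasLaw X (gaussianReal m v) P) {p : ℝ≥0∞} (hp : p ≠ ∞) :
    MemLp X p P := by
  have h := memLp_id_gaussianReal' (μ := m) (v := v) p hp
  rwa [← hX.map_eq, memLp_map_measure_iff aestronglyMeasurable_id hX.aemeasurable] at h

lemma memLp_two_mul_of_gaussianReal (hX : HasLaw X (gaussianReal m v) P)
    (hY : HasLaw Y (gaussianReal m' w) P) : MemLp (fun ω => X ω * Y ω) 2 P :=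
  (hY.memLp_of_gaussianReal (p := 4) (by simp)).mul' (hX.memLp_of_gaussianReal (p := 4) (by simp))

lemma integral_eq_zero_of_gaussianReal (hX : HasLaw X (gaussianReal 0 v) P) : ∫ ω, X ω ∂P = 0 :=
  hX.integral_eq.trans integral_id_gaussianReal

lemma integral_sq_of_gaussianReal (hX : HasLaw X (gaussianReal 0 v) P) :
    ∫ ω, X ω ^ 2 ∂P = v :=
  (hX.integral_comp (f := fun x => x ^ 2) (by fun_prop)).trans (integral_sq_gaussianReal v)

lemma integral_abs_of_gaussianReal (hX : HasLaw X (gaussianReal 0 v) P) :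
    ∫ ω, |X ω| ∂P = √(2 * v / π) :=
  (hX.integral_comp (f := fun x => |x|) (by fun_prop)).trans (integral_abs_gaussianReal v)

end ProbabilityTheory.HasLaw

lemma sum_sum_ite_eq_const {ι : Type*} [Fintype ι] [DecidableEq ι] (a b : ℝ) :
    ∑ i : ι, ∑ j : ι, (if i = j then a else b)
      = Fintype.card ι * a + Fintype.card ι * (Fintype.card ι - 1) * b := by
  have h : ∀ i j : ι, (if i = j then a else b) = b + if i = j then a - b else 0 := by
    intro i j
    split_ifs <;> ring
  simp only [h, sum_add_distrib, sum_ite_eq, mem_univ, if_true, sum_const, card_univ, nsmul_eq_mul]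
  ring

section SecondMoment

variable {Ω ι : Type*} [MeasurableSpace Ω] {P : Measure Ω} [Fintype ι] {f : ι → Ω → ℝ}

lemma integrable_sq_sum (hf : ∀ i, MemLp (f i) 2 P) :
    Integrable (fun ω => (∑ i, f i ω) ^ 2) P :=
  (memLp_finsetSum _ fun i _ => hf i).integrable_sq

lemma integral_sq_sum (hf : ∀ i, MemLp (f i) 2 P) :
    ∫ ω, (∑ i, f i ω) ^ 2 ∂P = ∑ i, ∑ j, ∫ ω, f i ω * f j ω ∂P := by
  have hint : ∀ i j, Integrable (fun ω => f i ω * f j ω) P :=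
    fun i j => (hf i).integrable_mul (hf j)
  simp_rw [sq, sum_mul_sum]
  rw [integral_finsetSum _ fun i _ => integrable_finsetSum _ fun j _ => hint i j]
  exact sum_congr rfl fun i _ => integral_finsetSum _ fun j _ => hint i j

lemma integral_sq_sum_of_moments (hf : ∀ i, MemLp (f i) 2 P) {a b : ℝ}
    (hdiag : ∀ i, ∫ ω, f i ω ^ 2 ∂P = a)
    (hoff : Pairwise fun i j => ∫ ω, f i ω * f j ω ∂P = b) :
    ∫ ω, (∑ i, f i ω) ^ 2 ∂P
      = Fintype.card ι * a + Fintype.card ι * (Fintype.card ι - 1) * b := by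
  classical
  rw [integral_sq_sum hf, ← sum_sum_ite_eq_const]
  refine sum_congr rfl fun i _ => sum_congr rfl fun j _ => ?_
  split_ifs with hij
  · subst hij
    simp_rw [← sq]
    exact hdiag i
  · exact hoff hij

end SecondMoment

section GaussianSums

variable {Ω ι : Type*} [MeasurableSpace Ω] {P : Measure Ω} [Fintype ι] {v w : ℝ≥0}

lemma integral_sq_sum_mul_of_gaussianReal {X Y : ι → Ω → ℝ} (hindep : iIndepFun (Sum.elim X Y) P)
    (hX : ∀ i, HasLaw (X i) (gaussianReal 0 v) P) (hY : ∀ i, HasLaw (Y i) (gaussianReal 0 w) P) :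
    ∫ ω, (∑ i, X i ω * Y i ω) ^ 2 ∂P = Fintype.card ι * (v * w) := by
  have hmeas : ∀ k, AEMeasurable (Sum.elim X Y k) P := by
    rintro (i | i)
    exacts [(hX i).aemeasurable, (hY i).aemeasurable]
  have hXY : ∀ i, X i ⟂ᵢ[P] Y i := fun i => hindep.indepFun Sum.inl_ne_inr
  have hmean : ∀ i, ∫ ω, X i ω * Y i ω ∂P = 0 := fun i => by
    rw [(hXY i).integral_fun_mul_eq_mul_integral (hX i).aemeasurable.aestronglyMeasurable
      (hY i).aemeasurable.aestronglyMeasurable, (hX i).integral_eq_zero_of_gaussianReal, zero_mul]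
  rw [integral_sq_sum_of_moments (a := v * w) (b := 0)
    (fun i => (hX i).memLp_two_mul_of_gaussianReal (hY i)), mul_zero, add_zero]
  · intro i
    simp_rw [mul_pow]
    rw [(hXY i).integral_fun_comp_mul_comp (f := fun x => x ^ 2) (g := fun x => x ^ 2)
      (hX i).aemeasurable (hY i).aemeasurable (by fun_prop) (by fun_prop),
      (hX i).integral_sq_of_gaussianReal, (hY i).integral_sq_of_gaussianReal]
  · intro i j hij
    have hX_ne : (Sum.inl i : ι ⊕ ι) ≠ .inl j := by simpa using hij
    have hY_ne : (Sum.inr i : ι ⊕ ι) ≠ .inr j := by simpa using hij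
    have h := hindep.indepFun_mul_mul₀ hmeas _ _ _ _ hX_ne Sum.inl_ne_inr Sum.inr_ne_inl hY_ne
    refine (h.integral_fun_mul_eq_mul_integral ((hmeas _).mul (hmeas _)).aestronglyMeasurable
      ((hmeas _).mul (hmeas _)).aestronglyMeasurable).trans ?_
    exact mul_eq_zero_of_left (hmean i) _

lemma integral_sq_sum_abs_of_gaussianReal {X : ι → Ω → ℝ}
    (hindep : Pairwise fun i j => X i ⟂ᵢ[P] X j) (hX : ∀ i, HasLaw (X i) (gaussianReal 0 v) P) :
    ∫ ω, (∑ i, |X i ω|) ^ 2 ∂P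
      = Fintype.card ι * v + Fintype.card ι * (Fintype.card ι - 1) * (2 * v / π) := by
  refine integral_sq_sum_of_moments (f := fun i ω => |X i ω|)
    (fun i => ((hX i).memLp_of_gaussianReal (p := 2) (by simp)).abs) (fun i => ?_) fun i j hij => ?_
  · simp_rw [sq_abs]
    exact (hX i).integral_sq_of_gaussianReal
  · dsimp only
    rw [(hindep hij).integral_fun_comp_mul_comp (f := abs) (g := abs) (hX i).aemeasurable
      (hX j).aemeasurable (by fun_prop) (by fun_prop), (hX i).integral_abs_of_gaussianReal,
      (hX j).integral_abs_of_gaussianReal, mul_self_sqrt (by positivity)]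

end GaussianSums

theorem stmt_6_general {Ω : Type*} [MeasurableSpace Ω] (μ : Measure Ω)
    {n : ℕ} (X Y : Fin n → Ω → ℝ) (σ : ℝ)
    (hindep : iIndepFun (Sum.elim X Y) μ)
    (hdist : ∀ k : Fin n ⊕ Fin n,
      Measure.map (Sum.elim X Y k) μ = gaussianReal 0 ((σ ^ 2).toNNReal)) :
    ∫ ω, (σ ^ 2 * n * ∑ i, (X i ω) ^ 2 - (∑ i, X i ω * Y i ω) ^ 2) ∂μ
      = (π / 2) *
        ∫ ω, (σ ^ 2 * (∑ i, |X i ω|) ^ 2 - (∑ i, X i ω * Y i ω) ^ 2) ∂μ := by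
  set v := (σ ^ 2).toNNReal
  have hv : (v : ℝ) = σ ^ 2 := Real.coe_toNNReal _ (sq_nonneg σ)
  have hlaw : ∀ k, HasLaw (Sum.elim X Y k) (gaussianReal 0 v) μ := fun k =>
    ⟨.of_map_ne_zero ((hdist k).symm ▸ IsProbabilityMeasure.ne_zero _), hdist k⟩
  have hX : ∀ i, HasLaw (X i) (gaussianReal 0 v) μ := fun i => hlaw (.inl i)
  have hY : ∀ i, HasLaw (Y i) (gaussianReal 0 v) μ := fun i => hlaw (.inr i)
  have hXindep : Pairwise fun i j => X i ⟂ᵢ[μ] X j :=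
    fun i j hij => (hindep.precomp Sum.inl_injective).indepFun hij
  have hX2 : ∀ i, MemLp (X i) 2 μ := fun i => (hX i).memLp_of_gaussianReal (by simp)
  have hinner := integrable_sq_sum fun i => (hX i).memLp_two_mul_of_gaussianReal (hY i)
  have habs := integrable_sq_sum (f := fun i ω => |X i ω|) fun i => (hX2 i).abs
  have hsum_sq : ∫ ω, ∑ i, X i ω ^ 2 ∂μ = n * v := by
    rw [integral_finsetSum _ fun i _ => (hX2 i).integrable_sq]
    simp [(hX _).integral_sq_of_gaussianReal]
  rw [integral_sub ((integrable_finsetSum _ fun i _ => (hX2 i).integrable_sq).const_mul _) hinner,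
    integral_sub (habs.const_mul _) hinner, integral_const_mul, integral_const_mul, hsum_sq,
    integral_sq_sum_mul_of_gaussianReal hindep hX hY,
    integral_sq_sum_abs_of_gaussianReal hXindep hX,
    Fintype.card_fin, hv]
  field_simp
  ring

/-- For i.i.d. `N(0, σ²)` entries, the `L¹` data structure improves the average
sample efficiency of inner product estimation by a factor of `π / 2`. -/
theorem stmt_6 {Ω : Type*} [MeasurableSpace Ω] (μ : Measure Ω) [IsProbabilityMeasure μ]
    {n : ℕ} (hn : 2 ≤ n) (X Y : Fin n → Ω → ℝ) (σ : ℝ) (hσ : 0 < σ)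
    (hmX : ∀ i, Measurable (X i)) (hmY : ∀ i, Measurable (Y i))
    (hindep : iIndepFun (Sum.elim X Y) μ)
    (hdist : ∀ k : Fin n ⊕ Fin n,
      Measure.map (Sum.elim X Y k) μ = gaussianReal 0 ((σ ^ 2).toNNReal)) :
    ∫ ω, (σ ^ 2 * n * ∑ i, (X i ω) ^ 2 - (∑ i, X i ω * Y i ω) ^ 2) ∂μ
      = (π / 2) *
        ∫ ω, (σ ^ 2 * (∑ i, |X i ω|) ^ 2 - (∑ i, X i ω * Y i ω) ^ 2) ∂μ :=
  stmt_6_general μ X Y σ hindep hdist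
end

section
/- Let a > 0, n ≥ 2, and let x_1,…,x_n, y_1,…,y_n be 2n jointly independent real random variables, each uniformly distributed on (−a, a). With υ = a²/3, E[υ·n·Σ_{i=1}^n x_i² − (Σ_{i=1}^n x_i y_i)²] = (4/3)·E[υ·(Σ_{i=1}^n |x_i|)² − (Σ_{i=1}^n x_i y_i)²]; i.e., replacing the L² data structure with the L¹ data structure improves the average sample efficiency of inner product estimation by a factor of 4/3. -/
/-!
With `υ = a²/3 = E[x²]` and `E|x| = a/2`, both expectations are computed exactly. The second
moment of a sum of `n` pairwise independent variables with common first and second moments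
`m₁, m₂` is `n m₂ + n(n-1) m₁²`. Applied to `xᵢyᵢ` (`m₁ = 0`, `m₂ = υ²`) and to `|xᵢ|`
(`m₁ = a/2`, `m₂ = υ`) this gives `E[υ n Σ xᵢ² - ⟨x,y⟩²] = n(n-1) υ²` and
`E[υ (Σ |xᵢ|)² - ⟨x,y⟩²] = n(n-1) υ a²/4`, whose ratio is `4υ/a² = 4/3`.
-/

open Finset MeasureTheory ProbabilityTheory

noncomputable def uniformIoo (a : ℝ) : Measure ℝ :=
  (ENNReal.ofReal (2 * a))⁻¹ • volume.restrict (Set.Ioo (-a) a)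

section UniformMoments

variable {a : ℝ}

lemma integral_uniformIoo (ha : 0 ≤ a) (f : ℝ → ℝ) :
    ∫ x, f x ∂uniformIoo a = (2 * a)⁻¹ * ∫ x in (-a)..a, f x := by
  rw [uniformIoo, integral_smul_measure, ENNReal.toReal_inv, ENNReal.toReal_ofReal (by linarith),
    intervalIntegral.integral_of_le (by linarith), integral_Ioc_eq_integral_Ioo, smul_eq_mul]

lemma integral_id_uniformIoo (ha : 0 ≤ a) : ∫ x, x ∂uniformIoo a = 0 := by
  rw [integral_uniformIoo ha, integral_id]
  ring

lemma integral_sq_uniformIoo (ha : 0 < a) : ∫ x, x ^ 2 ∂uniformIoo a = a ^ 2 / 3 := by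
  rw [integral_uniformIoo ha.le, integral_pow]
  field_simp
  ring

lemma integral_abs_uniformIoo (ha : 0 < a) : ∫ x, |x| ∂uniformIoo a = a / 2 := by
  have h_neg : ∫ x in (-a)..0, |x| = a ^ 2 / 2 := by
    rw [intervalIntegral.integral_congr (g := fun x => -x) fun x hx =>
        abs_of_nonpos (by rw [Set.uIcc_of_le (by linarith)] at hx; exact hx.2),
      intervalIntegral.integral_neg, integral_id]
    ring
  have h_pos : ∫ x in (0 : ℝ)..a, |x| = a ^ 2 / 2 := by
    rw [intervalIntegral.integral_congr (g := fun x => x) fun x hx =>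
        abs_of_nonneg (by rw [Set.uIcc_of_le ha.le] at hx; exact hx.1),
      integral_id]
    ring
  rw [integral_uniformIoo ha.le, ← intervalIntegral.integral_add_adjacent_intervals (b := 0)
    intervalIntegral.intervalIntegrable_id.abs intervalIntegral.intervalIntegrable_id.abs,
    h_neg, h_pos]
  field_simp
  ring

lemma ae_abs_le_uniformIoo (a : ℝ) : ∀ᵐ x ∂uniformIoo a, |x| ≤ a :=
  (Measure.ae_smul_measure (ae_restrict_mem measurableSet_Ioo) _).mono fun _ hx =>
    abs_le.2 ⟨hx.1.le, hx.2.le⟩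

end UniformMoments

section UniformRandomVariable

variable {Ω : Type*} [MeasurableSpace Ω] {μ : Measure Ω} {X : Ω → ℝ} {a : ℝ}

lemma integral_comp_of_map_eq_uniformIoo (hX : Measurable X) (hmap : μ.map X = uniformIoo a)
    {f : ℝ → ℝ} (hf : Measurable f) : ∫ ω, f (X ω) ∂μ = ∫ x, f x ∂uniformIoo a := by
  rw [← hmap, integral_map hX.aemeasurable hf.aestronglyMeasurable]

variable (hX : Measurable X) (hmap : μ.map X = uniformIoo a)
include hX hmap

lemma memLp_top_of_map_eq_uniformIoo : MemLp X ⊤ μ :=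
  memLp_top_of_bound hX.aestronglyMeasurable a <|
    ae_of_ae_map hX.aemeasurable (hmap ▸ ae_abs_le_uniformIoo a)

lemma integral_eq_zero_of_map_eq_uniformIoo (ha : 0 ≤ a) : ∫ ω, X ω ∂μ = 0 :=
  (integral_comp_of_map_eq_uniformIoo hX hmap measurable_id).trans (integral_id_uniformIoo ha)

lemma integral_sq_of_map_eq_uniformIoo (ha : 0 < a) : ∫ ω, X ω ^ 2 ∂μ = a ^ 2 / 3 :=
  (integral_comp_of_map_eq_uniformIoo hX hmap (measurable_id.pow_const 2)).trans
    (integral_sq_uniformIoo ha)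

lemma integral_abs_of_map_eq_uniformIoo (ha : 0 < a) : ∫ ω, |X ω| ∂μ = a / 2 :=
  (integral_comp_of_map_eq_uniformIoo hX hmap measurable_abs).trans (integral_abs_uniformIoo ha)

end UniformRandomVariable

lemma integral_sq_sum_of_pairwise_indepFun {Ω : Type*} [MeasurableSpace Ω] {μ : Measure Ω}
    [IsProbabilityMeasure μ] {ι : Type*} [Fintype ι] {Z : ι → Ω → ℝ}
    (hZ : ∀ i, MemLp (Z i) 2 μ) (hind : Pairwise fun i j => IndepFun (Z i) (Z j) μ)
    {m₁ m₂ : ℝ} (h₁ : ∀ i, ∫ ω, Z i ω ∂μ = m₁) (h₂ : ∀ i, ∫ ω, Z i ω ^ 2 ∂μ = m₂) :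
    ∫ ω, (∑ i, Z i ω) ^ 2 ∂μ
      = Fintype.card ι * m₂ + Fintype.card ι * (Fintype.card ι - 1) * m₁ ^ 2 := by
  have hvar_sum : variance (∑ i, Z i) μ = ∑ i, variance (Z i) μ :=
    IndepFun.variance_sum (fun i _ => hZ i) fun i _ j _ hij => hind hij
  have hvar : ∀ i, variance (Z i) μ = m₂ - m₁ ^ 2 := fun i => by
    rw [variance_eq_sub (hZ i), ← h₁ i, ← h₂ i]
    rfl
  have hmean : ∫ ω, ∑ i, Z i ω ∂μ = Fintype.card ι * m₁ := by
    rw [integral_finsetSum _ fun i _ => (hZ i).integrable one_le_two]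
    simp [h₁]
  rw [variance_eq_sub (memLp_finsetSum' _ fun i _ => hZ i)] at hvar_sum
  simp only [hvar, sum_const, card_univ, nsmul_eq_mul, Pi.pow_apply, Finset.sum_apply] at hvar_sum
  rw [hmean] at hvar_sum
  linear_combination hvar_sum

section UniformFamily

variable {Ω : Type*} [MeasurableSpace Ω] {μ : Measure Ω} {ι : Type*} [Fintype ι]
  {X Y : ι → Ω → ℝ} {a : ℝ} (hmX : ∀ i, Measurable (X i))
  (hX : ∀ i, μ.map (X i) = uniformIoo a) (ha : 0 < a)
include hmX hX ha

lemma integral_sum_sq_of_map_eq_uniformIoo [IsFiniteMeasure μ] :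
    ∫ ω, ∑ i, X i ω ^ 2 ∂μ = Fintype.card ι * (a ^ 2 / 3) := by
  rw [integral_finsetSum _ fun i _ =>
    ((memLp_top_of_map_eq_uniformIoo (hmX i) (hX i)).mono_exponent le_top).integrable_sq]
  simp [integral_sq_of_map_eq_uniformIoo (hmX _) (hX _) ha]

lemma integral_sq_sum_abs_of_map_eq_uniformIoo [IsProbabilityMeasure μ]
    (hind : Pairwise fun i j => IndepFun (X i) (X j) μ) :
    ∫ ω, (∑ i, |X i ω|) ^ 2 ∂μ
      = Fintype.card ι * (a ^ 2 / 3) + Fintype.card ι * (Fintype.card ι - 1) * (a / 2) ^ 2 :=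
  integral_sq_sum_of_pairwise_indepFun (Z := fun i ω => |X i ω|)
    (fun i => (memLp_top_of_map_eq_uniformIoo (hmX i) (hX i)).abs.mono_exponent le_top)
    (fun _ _ hij => (hind hij).comp measurable_abs measurable_abs)
    (fun i => integral_abs_of_map_eq_uniformIoo (hmX i) (hX i) ha)
    (fun i => by simpa using integral_sq_of_map_eq_uniformIoo (hmX i) (hX i) ha)

lemma integral_sq_sum_mul_of_map_eq_uniformIoo [IsProbabilityMeasure μ]
    (hmY : ∀ i, Measurable (Y i)) (hY : ∀ i, μ.map (Y i) = uniformIoo a)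
    (hind : iIndepFun (Sum.elim X Y) μ) :
    ∫ ω, (∑ i, X i ω * Y i ω) ^ 2 ∂μ = Fintype.card ι * (a ^ 2 / 3) ^ 2 := by
  have hXY : ∀ i, IndepFun (X i) (Y i) μ := fun i => hind.indepFun Sum.inl_ne_inr
  refine integral_sq_sum_of_pairwise_indepFun (Z := fun i ω => X i ω * Y i ω) (m₁ := 0)
    (m₂ := (a ^ 2 / 3) ^ 2) (fun i => ?_) (fun i j hij => ?_) (fun i => ?_) (fun i => ?_)
    |>.trans (by simp)
  · exact ((memLp_top_of_map_eq_uniformIoo (hmY i) (hY i)).mul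
      (memLp_top_of_map_eq_uniformIoo (hmX i) (hX i))).mono_exponent le_top
  · exact hind.indepFun_mul_mul (Sum.rec hmX hmY) (.inl i) (.inr i) (.inl j) (.inr j)
      (by simpa using hij) Sum.inl_ne_inr Sum.inr_ne_inl (by simpa using hij)
  · rw [(hXY i).integral_fun_mul_eq_mul_integral (hmX i).aestronglyMeasurable
      (hmY i).aestronglyMeasurable, integral_eq_zero_of_map_eq_uniformIoo (hmX i) (hX i) ha.le,
      zero_mul]
  · have hXY_sq : IndepFun (fun ω => X i ω ^ 2) (fun ω => Y i ω ^ 2) μ :=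
      (hXY i).comp (measurable_id.pow_const 2) (measurable_id.pow_const 2)
    simp_rw [mul_pow]
    rw [hXY_sq.integral_fun_mul_eq_mul_integral ((hmX i).pow_const 2).aestronglyMeasurable
      ((hmY i).pow_const 2).aestronglyMeasurable,
      integral_sq_of_map_eq_uniformIoo (hmX i) (hX i) ha,
      integral_sq_of_map_eq_uniformIoo (hmY i) (hY i) ha]
    ring

end UniformFamily

theorem stmt_7_general {Ω : Type*} [MeasurableSpace Ω] (μ : Measure Ω) [IsProbabilityMeasure μ]
    {n : ℕ} (X Y : Fin n → Ω → ℝ) (a : ℝ) (ha : 0 < a)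
    (hmX : ∀ i, Measurable (X i)) (hmY : ∀ i, Measurable (Y i))
    (hindep : iIndepFun (Sum.elim X Y) μ)
    (hdist : ∀ k : Fin n ⊕ Fin n,
      Measure.map (Sum.elim X Y k) μ
        = (ENNReal.ofReal (2 * a))⁻¹ • volume.restrict (Set.Ioo (-a) a)) :
    ∫ ω, (a ^ 2 / 3 * n * ∑ i, (X i ω) ^ 2 - (∑ i, X i ω * Y i ω) ^ 2) ∂μ
      = (4 / 3) *
        ∫ ω, (a ^ 2 / 3 * (∑ i, |X i ω|) ^ 2 - (∑ i, X i ω * Y i ω) ^ 2) ∂μ := by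
  have hX : ∀ i, μ.map (X i) = uniformIoo a := fun i => hdist (.inl i)
  have hY : ∀ i, μ.map (Y i) = uniformIoo a := fun i => hdist (.inr i)
  have hLpX (i) : MemLp (X i) ⊤ μ := memLp_top_of_map_eq_uniformIoo (hmX i) (hX i)
  have hLpY (i) : MemLp (Y i) ⊤ μ := memLp_top_of_map_eq_uniformIoo (hmY i) (hY i)
  have hLpXY (i) : MemLp (fun ω => X i ω * Y i ω) 2 μ :=
    ((hLpY i).mul (hLpX i)).mono_exponent le_top
  have hLpabs (i) : MemLp (fun ω => |X i ω|) 2 μ := (hLpX i).abs.mono_exponent le_top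
  have hint_inner := (memLp_finsetSum univ fun i _ => hLpXY i).integrable_sq
  have hint_l1 :=
    (memLp_finsetSum univ fun i _ => hLpabs i).integrable_sq.const_mul (a ^ 2 / 3)
  have hint_l2 := (integrable_finsetSum univ fun i _ =>
    ((hLpX i).mono_exponent le_top).integrable_sq).const_mul (a ^ 2 / 3 * n)
  have hXX : Pairwise fun i j => IndepFun (X i) (X j) μ := fun i j hij =>
    hindep.indepFun (Sum.inl_injective.ne hij)
  rw [integral_sub hint_l2 hint_inner, integral_sub hint_l1 hint_inner, integral_const_mul,
    integral_const_mul, integral_sum_sq_of_map_eq_uniformIoo hmX hX ha,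
    integral_sq_sum_abs_of_map_eq_uniformIoo hmX hX ha hXX,
    integral_sq_sum_mul_of_map_eq_uniformIoo hmX hX ha hmY hY hindep]
  simp only [Fintype.card_fin]
  ring

/-- For i.i.d. entries uniform on `(-a, a)` (so `υ = a²/3`), the `L¹` data
structure improves the average sample efficiency of inner product estimation by a
factor of `4 / 3`. -/
theorem stmt_7 {Ω : Type*} [MeasurableSpace Ω] (μ : Measure Ω) [IsProbabilityMeasure μ]
    {n : ℕ} (hn : 2 ≤ n) (X Y : Fin n → Ω → ℝ) (a : ℝ) (ha : 0 < a)
    (hmX : ∀ i, Measurable (X i)) (hmY : ∀ i, Measurable (Y i))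
    (hindep : iIndepFun (Sum.elim X Y) μ)
    (hdist : ∀ k : Fin n ⊕ Fin n,
      Measure.map (Sum.elim X Y k) μ
        = (ENNReal.ofReal (2 * a))⁻¹ • volume.restrict (Set.Ioo (-a) a)) :
    ∫ ω, (a ^ 2 / 3 * n * ∑ i, (X i ω) ^ 2 - (∑ i, X i ω * Y i ω) ^ 2) ∂μ
      = (4 / 3) *
        ∫ ω, (a ^ 2 / 3 * (∑ i, |X i ω|) ^ 2 - (∑ i, X i ω * Y i ω) ^ 2) ∂μ :=
  stmt_7_general μ X Y a ha hmX hmY hindep hdist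
end

section
/- Let p ≥ 1 and let x_1,…,x_n and A_{ij} (1 ≤ i ≤ m, 1 ≤ j ≤ n) be jointly independent, identically distributed real random variables with μ := E[|x_1|^p] and σ² := Var[|x_1|^p] both finite. Then Var[(1/(mn))·Σ_{i=1}^m Σ_{j=1}^n |x_j A_{ij}|^p] = σ²·(σ² + (m+1)μ²)/(mn). -/
/-! Summing over rows first, the sum is `∑ⱼ |xⱼ|ᵖ Tⱼ` with column sums `Tⱼ = ∑ᵢ |Aᵢⱼ|ᵖ`.
The `n` terms are functions of disjoint blocks of the independent family, so their variances add.
In each term `|xⱼ|ᵖ` is independent of `Tⱼ`, which has mean `mμ` and variance `mσ²`, and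
`Var[XY] = (Var X + E[X]²)(Var Y + E[Y]²) - E[X]²E[Y]²` gives
`(σ² + μ²)(mσ² + m²μ²) - m²μ⁴ = mσ²(σ² + (m+1)μ²)`. -/

open Finset MeasureTheory ProbabilityTheory Sum

section

variable {Ω : Type*} [MeasurableSpace Ω] {P : Measure Ω}

namespace ProbabilityTheory

theorem iIndepFun.indepFun_comp_of_dependsOn {ι β γ δ : Type*} [MeasurableSpace β]
    [Nonempty β] [MeasurableSpace γ] [MeasurableSpace δ] {f : ι → Ω → β} (h : iIndepFun f P)
    (hf : ∀ i, AEMeasurable (f i) P) {S T : Finset ι} (hST : Disjoint S T)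
    {φ : (ι → β) → γ} {ψ : (ι → β) → δ} (hφ : Measurable φ) (hψ : Measurable ψ)
    (hφS : DependsOn φ S) (hψT : DependsOn ψ T) :
    IndepFun (fun ω ↦ φ (f · ω)) (fun ω ↦ ψ (f · ω)) P := by
  classical
  let fill (S : Finset ι) (v : S → β) (k : ι) : β :=
    if hk : k ∈ S then v ⟨k, hk⟩ else Classical.arbitrary β
  have hfill (S : Finset ι) : Measurable (fill S) := by
    refine measurable_pi_lambda _ fun k ↦ ?_
    by_cases hk : k ∈ S
    · simpa [fill, hk] using measurable_pi_apply _
    · simp [fill, hk]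
  have hrestrict (S : Finset ι) (ω : Ω) (k : ι) (hk : k ∈ S) :
      f k ω = fill S (fun i : S ↦ f i ω) k := by
    simp [fill, hk]
  have := (h.indepFun_finset₀ S T hST hf).comp (hφ.comp (hfill S)) (hψ.comp (hfill T))
  convert this using 1 <;> funext ω
  · exact hφS (hrestrict S ω)
  · exact hψT (hrestrict T ω)

theorem IndepFun.memLp_two_mul_s12 {X Y : Ω → ℝ} (hXY : IndepFun X Y P) (hX : MemLp X 2 P)
    (hY : MemLp Y 2 P) : MemLp (X * Y) 2 P := by
  refine (memLp_two_iff_integrable_sq (hX.1.mul hY.1)).2 ?_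
  simp only [Pi.mul_apply, mul_pow]
  exact (hXY.comp (measurable_id.pow_const 2) (measurable_id.pow_const 2)).integrable_mul
    hX.integrable_sq hY.integrable_sq

theorem IndepFun.variance_mul_s12 [IsProbabilityMeasure P] {X Y : Ω → ℝ} (hXY : IndepFun X Y P)
    (hX : MemLp X 2 P) (hY : MemLp Y 2 P) :
    variance (X * Y) P =
      (variance X P + P[X] ^ 2) * (variance Y P + P[Y] ^ 2) - P[X] ^ 2 * P[Y] ^ 2 := by
  have hmean : P[X * Y] = P[X] * P[Y] :=
    hXY.integral_mul_eq_mul_integral hX.aestronglyMeasurable hY.aestronglyMeasurable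
  have hsq : P[(X * Y) ^ 2] = P[X ^ 2] * P[Y ^ 2] := by
    rw [mul_pow]
    exact (hXY.comp (measurable_id.pow_const 2)
      (measurable_id.pow_const 2)).integral_mul_eq_mul_integral
        hX.integrable_sq.1 hY.integrable_sq.1
  rw [variance_eq_sub (hXY.memLp_two_mul_s12 hX hY), variance_eq_sub hX, variance_eq_sub hY, hmean,
    hsq]
  ring

end ProbabilityTheory

-- `W (inl j)` plays the coefficient `xⱼ` and `W (inr (i, j))` the matrix entry `Aᵢⱼ`.
variable {ι κ : Type*} [Fintype κ] {W : ι ⊕ (κ × ι) → Ω → ℝ}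

theorem indepFun_coeff_colSum (hW : iIndepFun W P) (hL2 : ∀ k, MemLp (W k) 2 P) (j : ι) :
    IndepFun (W (inl j)) (∑ i, W (inr (i, j))) P := by
  classical
  have hdisj : Disjoint {inl j} (univ.image fun i : κ ↦ (inr (i, j) : ι ⊕ (κ × ι))) := by
    simp
  have := hW.indepFun_comp_of_dependsOn (fun k ↦ (hL2 k).aemeasurable) hdisj
    (φ := fun u ↦ u (inl j)) (ψ := fun u ↦ ∑ i, u (inr (i, j))) (by fun_prop) (by fun_prop)
    (fun u v h ↦ h _ (by simp)) (fun u v h ↦ sum_congr rfl fun i _ ↦ h _ (by simp))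
  simpa only [← Finset.sum_fn] using this

theorem variance_coeff_mul_colSum (hW : iIndepFun W P) (hL2 : ∀ k, MemLp (W k) 2 P)
    {μ σ2 : ℝ} (hmean : ∀ k, P[W k] = μ) (hvar : ∀ k, variance (W k) P = σ2) (j : ι) :
    variance (W (inl j) * ∑ i, W (inr (i, j))) P =
      Fintype.card κ * σ2 * (σ2 + (Fintype.card κ + 1) * μ ^ 2) := by
  have := hW.isProbabilityMeasure
  have hsum_mean : P[∑ i, W (inr (i, j))] = Fintype.card κ * μ := by
    rw [Finset.sum_fn, integral_finsetSum _ fun i _ ↦ (hL2 _).integrable one_le_two]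
    simp [hmean]
  have hsum_var : variance (∑ i, W (inr (i, j))) P = Fintype.card κ * σ2 := by
    rw [IndepFun.variance_sum (fun i _ ↦ hL2 _)
      fun i _ i' _ hii' ↦ hW.indepFun (by simpa using hii')]
    simp [hvar]
  rw [(indepFun_coeff_colSum hW hL2 j).variance_mul_s12 (hL2 _)
    (memLp_finsetSum' _ fun i _ ↦ hL2 _), hsum_mean, hsum_var, hmean, hvar]
  ring

theorem indepFun_coeff_mul_colSum [Fintype ι] (hW : iIndepFun W P)
    (hL2 : ∀ k, MemLp (W k) 2 P) {j j' : ι} (hjj' : j ≠ j') :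
    IndepFun (W (inl j) * ∑ i, W (inr (i, j))) (W (inl j') * ∑ i, W (inr (i, j'))) P := by
  classical
  let column (j : ι) : Finset (ι ⊕ (κ × ι)) := {k | Sum.elim id Prod.snd k = j}
  have hdisj : Disjoint (column j) (column j') :=
    disjoint_filter.2 fun k _ h h' ↦ hjj' (h.symm.trans h')
  have hdep (j : ι) :
      DependsOn (fun u : ι ⊕ (κ × ι) → ℝ ↦ u (inl j) * ∑ i, u (inr (i, j))) (column j : Set _) :=
    fun u v h ↦ by
      dsimp only
      rw [h _ (by simp [column]), sum_congr rfl fun i _ ↦ h (inr (i, j)) (by simp [column])]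
  have := hW.indepFun_comp_of_dependsOn (fun k ↦ (hL2 k).aemeasurable) hdisj
    (by fun_prop) (by fun_prop) (hdep j) (hdep j')
  simpa only [Pi.mul_def, Finset.sum_fn] using this

theorem variance_sum_coeff_mul_colSum [Fintype ι] (hW : iIndepFun W P)
    (hL2 : ∀ k, MemLp (W k) 2 P) {μ σ2 : ℝ} (hmean : ∀ k, P[W k] = μ)
    (hvar : ∀ k, variance (W k) P = σ2) :
    variance (∑ j, W (inl j) * ∑ i, W (inr (i, j))) P =
      Fintype.card ι * Fintype.card κ * σ2 * (σ2 + (Fintype.card κ + 1) * μ ^ 2) := by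
  rw [IndepFun.variance_sum
    (fun j _ ↦ (indepFun_coeff_colSum hW hL2 j).memLp_two_mul_s12 (hL2 _)
      (memLp_finsetSum' _ fun i _ ↦ hL2 _))
    fun j _ j' _ hjj' ↦ indepFun_coeff_mul_colSum hW hL2 hjj']
  simp [variance_coeff_mul_colSum hW hL2 hmean hvar, mul_assoc]

end

theorem stmt_12_general {Ω : Type*} [MeasurableSpace Ω] (P : Measure Ω) [IsProbabilityMeasure P]
    {m n : ℕ} [NeZero m] [NeZero n] (p : ℝ)
    (x : Fin n → Ω → ℝ) (A : Fin m → Fin n → Ω → ℝ) (μp σ2 : ℝ)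
    (hindep : iIndepFun
      (Sum.elim x (fun ij : Fin m × Fin n => A ij.1 ij.2)) P)
    (hident : ∀ k : Fin n ⊕ (Fin m × Fin n),
      IdentDistrib (Sum.elim x (fun ij : Fin m × Fin n => A ij.1 ij.2) k) (x 0) P P)
    (hL2 : MemLp (fun ω => |x 0 ω| ^ p) 2 P)
    (hmom : ∫ ω, |x 0 ω| ^ p ∂P = μp)
    (hvar : variance (fun ω => |x 0 ω| ^ p) P = σ2) :
    variance (fun ω => (1 / ((m : ℝ) * n)) * ∑ i, ∑ j, |x j ω * A i j ω| ^ p) P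
      = σ2 * (σ2 + ((m : ℝ) + 1) * μp ^ 2) / ((m : ℝ) * n) := by
  set W : Fin n ⊕ (Fin m × Fin n) → Ω → ℝ :=
    fun k ω ↦ |Sum.elim x (fun ij : Fin m × Fin n => A ij.1 ij.2) k ω| ^ p
  have hg : Measurable fun t : ℝ ↦ |t| ^ p := by fun_prop
  have hident_W (k) : IdentDistrib (W k) (fun ω ↦ |x 0 ω| ^ p) P P := (hident k).comp hg
  have hsum (ω : Ω) :
      ∑ i, ∑ j, |x j ω * A i j ω| ^ p = (∑ j, W (inl j) * ∑ i, W (inr (i, j))) ω := by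
    simp only [Finset.sum_apply, Pi.mul_apply, mul_sum, W, elim_inl, elim_inr]
    rw [sum_comm]
    simp_rw [abs_mul, Real.mul_rpow (abs_nonneg _) (abs_nonneg _)]
  simp_rw [hsum]
  rw [variance_const_mul, variance_sum_coeff_mul_colSum (W := W) (hindep.comp _ fun _ ↦ hg)
    (fun k ↦ (hident_W k).symm.memLp_snd hL2) (fun k ↦ (hident_W k).integral_eq.trans hmom)
    (fun k ↦ (hident_W k).variance_eq.trans hvar)]
  simp only [Fintype.card_fin]
  field_simp

/-- For i.i.d. entries of `x` and `A` with `μ = E[|x_1|^p]` and `σ² = Var[|x_1|^p]`,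
the variance of `(1/(mn)) ∑_{i,j} |x_j A_{ij}|^p` is `σ²(σ² + (m+1)μ²)/(mn)`. -/
theorem stmt_12 {Ω : Type*} [MeasurableSpace Ω] (P : Measure Ω) [IsProbabilityMeasure P]
    {m n : ℕ} [NeZero m] [NeZero n] (p : ℝ) (hp : 1 ≤ p)
    (x : Fin n → Ω → ℝ) (A : Fin m → Fin n → Ω → ℝ) (μp σ2 : ℝ)
    (hmx : ∀ j, Measurable (x j)) (hmA : ∀ i j, Measurable (A i j))
    (hindep : iIndepFun
      (Sum.elim x (fun ij : Fin m × Fin n => A ij.1 ij.2)) P)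
    (hident : ∀ k : Fin n ⊕ (Fin m × Fin n),
      IdentDistrib (Sum.elim x (fun ij : Fin m × Fin n => A ij.1 ij.2) k) (x 0) P P)
    (hL2 : MemLp (fun ω => |x 0 ω| ^ p) 2 P)
    (hmom : ∫ ω, |x 0 ω| ^ p ∂P = μp)
    (hvar : variance (fun ω => |x 0 ω| ^ p) P = σ2) :
    variance (fun ω => (1 / ((m : ℝ) * n)) * ∑ i, ∑ j, |x j ω * A i j ω| ^ p) P
      = σ2 * (σ2 + ((m : ℝ) + 1) * μp ^ 2) / ((m : ℝ) * n) :=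
  stmt_12_general P p x A μp σ2 hindep hident hL2 hmom hvar
end

section
/- Let p ≥ 1 and let x_1,…,x_n and A_{ij} (1 ≤ i ≤ m, 1 ≤ j ≤ n) be jointly independent, identically distributed real random variables with μ := E[|x_1|^p] and σ² := Var[|x_1|^p] both finite. Then for any t > 0, P(|(1/(mn))·Σ_{i=1}^m Σ_{j=1}^n |x_j A_{ij}|^p − μ²| ≥ t) ≤ σ²·(σ² + (m+1)μ²)/(m n t²). -/
/-!
Write `W` for the family of the `|x_j|^p` and `|A_ij|^p`, so the sum is `S = ∑_{i,j} W_j W_ij`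
with mean `mnμ²`. By independence, two of its terms are uncorrelated unless they share the column
`j`: for different rows the covariance is `Var[W_j] E[W_ij] E[W_i'j] = σ²μ²`, and a term's own
variance is `σ⁴ + 2σ²μ²`. Summing gives `Var S = mnσ²(σ² + (m+1)μ²)`, and Chebyshev's inequality
for `S/(mn)` is the claim.
-/

open Finset MeasureTheory ProbabilityTheory

section Moments

variable {Ω : Type*} [MeasurableSpace Ω] {P : Measure Ω}

lemma ProbabilityTheory.IndepFun.memLp_two_mul_s14 {X Y : Ω → ℝ} (h : X ⟂ᵢ[P] Y)
    (hX : MemLp X 2 P) (hY : MemLp Y 2 P) : MemLp (X * Y) 2 P := by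
  refine (memLp_two_iff_integrable_sq (hX.1.mul hY.1)).2 ?_
  simpa only [Pi.mul_def, mul_pow, Function.comp_def, id] using
    (h.comp (measurable_id.pow_const 2) (measurable_id.pow_const 2)).integrable_mul
      hX.integrable_sq hY.integrable_sq

variable [IsProbabilityMeasure P]

lemma MeasureTheory.MemLp.integral_sq {X : Ω → ℝ} (hX : MemLp X 2 P) :
    P[X ^ 2] = Var[X; P] + P[X] ^ 2 := by
  rw [variance_eq_sub hX]; ring

lemma ProbabilityTheory.IndepFun.variance_mul_s14 {X Y : Ω → ℝ} (h : X ⟂ᵢ[P] Y)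
    (hX : MemLp X 2 P) (hY : MemLp Y 2 P) :
    Var[X * Y; P] = Var[X; P] * Var[Y; P] + Var[X; P] * P[Y] ^ 2 + P[X] ^ 2 * Var[Y; P] := by
  have hsq : P[X ^ 2 * Y ^ 2] = P[X ^ 2] * P[Y ^ 2] :=
    (h.comp (measurable_id.pow_const 2) (measurable_id.pow_const 2)).integral_mul_eq_mul_integral
      hX.integrable_sq.1 hY.integrable_sq.1
  rw [variance_eq_sub (h.memLp_two_mul_s14 hX hY), mul_pow, hsq, hX.integral_sq, hY.integral_sq,
    h.integral_mul_eq_mul_integral hX.1 hY.1]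
  ring

lemma ProbabilityTheory.iIndepFun.covariance_mul_mul_left {ι : Type*} {f : ι → Ω → ℝ}
    (hf : iIndepFun f P) (hf2 : ∀ l, MemLp (f l) 2 P) {i j k : ι}
    (hij : i ≠ j) (hik : i ≠ k) (hjk : j ≠ k) :
    cov[f i * f j, f i * f k; P] = Var[f i; P] * P[f j] * P[f k] := by
  have hmeas : ∀ l, AEMeasurable (f l) P := fun l => (hf2 l).aemeasurable
  have hsplit : (f i * f j) * (f i * f k) = (f i * f i) * (f j * f k) := by ring
  have hii : P[(f i * f i) * (f j * f k)] = P[f i * f i] * (P[f j] * P[f k]) := by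
    rw [(hf.indepFun_mul_mul₀ hmeas i i j k hij hik hij hik).integral_mul_eq_mul_integral
      ((hf2 i).1.mul (hf2 i).1) ((hf2 j).1.mul (hf2 k).1),
      (hf.indepFun hjk).integral_mul_eq_mul_integral (hf2 j).1 (hf2 k).1]
  rw [covariance_eq_sub ((hf.indepFun hij).memLp_two_mul_s14 (hf2 i) (hf2 j))
    ((hf.indepFun hik).memLp_two_mul_s14 (hf2 i) (hf2 k)), hsplit, hii, ← sq, (hf2 i).integral_sq,
    (hf.indepFun hij).integral_mul_eq_mul_integral (hf2 i).1 (hf2 j).1,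
    (hf.indepFun hik).integral_mul_eq_mul_integral (hf2 i).1 (hf2 k).1]
  ring

end Moments

section ColumnProducts

variable {Ω ι κ : Type*} [MeasurableSpace Ω] {P : Measure Ω} {W : ι ⊕ (κ × ι) → Ω → ℝ} {μ σ2 : ℝ}

/-- `W (.inl j)` plays `|x_j|^p` and `W (.inr (i, j))` plays `|A_ij|^p`. -/
def colProd (W : ι ⊕ (κ × ι) → Ω → ℝ) (q : κ × ι) : Ω → ℝ := W (.inl q.2) * W (.inr q)

lemma memLp_colProd (hW : iIndepFun W P) (hW2 : ∀ k, MemLp (W k) 2 P) (q : κ × ι) :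
    MemLp (colProd W q) 2 P :=
  (hW.indepFun Sum.inl_ne_inr).memLp_two_mul_s14 (hW2 _) (hW2 _)

lemma integral_colProd (hW : iIndepFun W P) (hW2 : ∀ k, MemLp (W k) 2 P)
    (hmean : ∀ k, P[W k] = μ) (q : κ × ι) : P[colProd W q] = μ ^ 2 := by
  rw [colProd, (hW.indepFun Sum.inl_ne_inr).integral_mul_eq_mul_integral (hW2 _).1 (hW2 _).1,
    hmean, hmean, sq]

variable [IsProbabilityMeasure P]

lemma covariance_colProd [DecidableEq ι] [DecidableEq κ] (hW : iIndepFun W P)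
    (hW2 : ∀ k, MemLp (W k) 2 P) (hmean : ∀ k, P[W k] = μ) (hvar : ∀ k, Var[W k; P] = σ2)
    (q q' : κ × ι) :
    cov[colProd W q, colProd W q'; P] =
      (if q.2 = q'.2 then σ2 * μ ^ 2 else 0) + (if q = q' then σ2 * (σ2 + μ ^ 2) else 0) := by
  obtain ⟨i, j⟩ := q
  obtain ⟨i', j'⟩ := q'
  by_cases hj : j = j'
  · subst hj
    by_cases hi : i = i'
    · subst hi
      rw [covariance_self (memLp_colProd hW hW2 _).aemeasurable, colProd,
        (hW.indepFun Sum.inl_ne_inr).variance_mul_s14 (hW2 _) (hW2 _)]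
      simp only [hmean, hvar, if_true]
      ring
    · rw [colProd, colProd, hW.covariance_mul_mul_left hW2 Sum.inl_ne_inr Sum.inl_ne_inr
        (by simpa using hi)]
      simp [hmean, hvar, hi, sq, mul_assoc]
  · have hindep := hW.indepFun_mul_mul₀ (fun k => (hW2 k).aemeasurable) (.inl j) (.inr (i, j))
      (.inl j') (.inr (i', j')) (by simpa using hj) Sum.inl_ne_inr Sum.inr_ne_inl (by simp [hj])
    rw [colProd, colProd, hindep.covariance_eq_zero (memLp_colProd hW hW2 (i, j))
      (memLp_colProd hW hW2 (i', j'))]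
    simp [hj]

variable [Fintype ι] [Fintype κ]

lemma integral_sum_colProd (hW : iIndepFun W P) (hW2 : ∀ k, MemLp (W k) 2 P)
    (hmean : ∀ k, P[W k] = μ) :
    P[∑ q, colProd W q] = Fintype.card κ * Fintype.card ι * μ ^ 2 := by
  simp only [Finset.sum_apply]
  rw [integral_finsetSum _ fun q _ => (memLp_colProd hW hW2 q).integrable one_le_two]
  simp [integral_colProd hW hW2 hmean]

lemma variance_sum_colProd (hW : iIndepFun W P) (hW2 : ∀ k, MemLp (W k) 2 P)
    (hmean : ∀ k, P[W k] = μ) (hvar : ∀ k, Var[W k; P] = σ2) :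
    Var[∑ q, colProd W q; P] =
      Fintype.card κ * Fintype.card ι * (σ2 * (σ2 + (Fintype.card κ + 1) * μ ^ 2)) := by
  classical
  rw [variance_sum (memLp_colProd hW hW2)]
  simp only [covariance_colProd hW hW2 hmean hvar, Finset.sum_add_distrib, Finset.sum_ite_eq,
    Finset.mem_univ, if_true, Fintype.sum_prod_type]
  simp only [sum_const, card_univ, nsmul_eq_mul]
  ring

lemma meas_ge_abs_average_colProd_sub_le [Nonempty ι] [Nonempty κ] (hW : iIndepFun W P)
    (hW2 : ∀ k, MemLp (W k) 2 P) (hmean : ∀ k, P[W k] = μ) (hvar : ∀ k, Var[W k; P] = σ2)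
    {t : ℝ} (ht : 0 < t) :
    P {ω | t ≤ |1 / ((Fintype.card κ : ℝ) * Fintype.card ι) * (∑ q, colProd W q) ω - μ ^ 2|} ≤
      ENNReal.ofReal (σ2 * (σ2 + (Fintype.card κ + 1) * μ ^ 2) /
        (Fintype.card κ * Fintype.card ι * t ^ 2)) := by
  set N : ℝ := Fintype.card κ * Fintype.card ι
  have hN : N ≠ 0 := by positivity
  have hL2 : MemLp (fun ω => 1 / N * (∑ q, colProd W q) ω) 2 P :=
    (memLp_finsetSum' _ fun q _ => memLp_colProd hW hW2 q).const_mul _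
  have hchebyshev := meas_ge_le_variance_div_sq hL2 ht
  rw [integral_const_mul, integral_sum_colProd hW hW2 hmean, variance_const_mul,
    variance_sum_colProd hW hW2 hmean hvar] at hchebyshev
  have hmean_avg : 1 / N * (N * μ ^ 2) = μ ^ 2 := by field_simp
  have hvar_avg : (1 / N) ^ 2 * (N * (σ2 * (σ2 + (Fintype.card κ + 1) * μ ^ 2))) / t ^ 2 =
      σ2 * (σ2 + (Fintype.card κ + 1) * μ ^ 2) / (N * t ^ 2) := by
    field_simp
  rwa [hmean_avg, hvar_avg] at hchebyshev

end ColumnProducts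

theorem stmt_14_general {Ω : Type*} [MeasurableSpace Ω] (P : Measure Ω) [IsProbabilityMeasure P]
    {m n : ℕ} [NeZero m] [NeZero n] (p : ℝ)
    (x : Fin n → Ω → ℝ) (A : Fin m → Fin n → Ω → ℝ) (μp σ2 : ℝ)
    (hindep : iIndepFun
      (Sum.elim x (fun ij : Fin m × Fin n => A ij.1 ij.2)) P)
    (hident : ∀ k : Fin n ⊕ (Fin m × Fin n),
      IdentDistrib (Sum.elim x (fun ij : Fin m × Fin n => A ij.1 ij.2) k) (x 0) P P)
    (hL2 : MemLp (fun ω => |x 0 ω| ^ p) 2 P)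
    (hmom : ∫ ω, |x 0 ω| ^ p ∂P = μp)
    (hvar : variance (fun ω => |x 0 ω| ^ p) P = σ2)
    (t : ℝ) (ht : 0 < t) :
    P {ω | t ≤ |(1 / ((m : ℝ) * n)) * (∑ i, ∑ j, |x j ω * A i j ω| ^ p) - μp ^ 2|}
      ≤ ENNReal.ofReal (σ2 * (σ2 + ((m : ℝ) + 1) * μp ^ 2) / ((m : ℝ) * n * t ^ 2)) := by
  have hφ : Measurable fun a : ℝ => |a| ^ p := measurable_id.abs.pow_const p
  set W : Fin n ⊕ (Fin m × Fin n) → Ω → ℝ :=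
    fun k => (fun a => |a| ^ p) ∘ Sum.elim x (fun ij : Fin m × Fin n => A ij.1 ij.2) k
  have hidW : ∀ k, IdentDistrib (W k) (fun ω => |x 0 ω| ^ p) P P := fun k => (hident k).comp hφ
  have hW2 : ∀ k, MemLp (W k) 2 P := fun k => (hidW k).memLp_iff.2 hL2
  have hsum : ∀ ω, ∑ i, ∑ j, |x j ω * A i j ω| ^ p = (∑ q, colProd W q) ω := fun ω => by
    simp [Fintype.sum_prod_type, colProd, W, abs_mul, Real.mul_rpow]
  simp_rw [hsum]
  simpa using meas_ge_abs_average_colProd_sub_le (hindep.comp _ fun _ => hφ) hW2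
    (fun k => (hidW k).integral_eq.trans hmom) (fun k => (hidW k).variance_eq.trans hvar) ht

/-- Chebyshev bound: `(1/(mn)) ∑_{i,j} |x_j A_{ij}|^p` concentrates around `μ²`
with deviation probability at most `σ²(σ² + (m+1)μ²)/(m n t²)`. -/
theorem stmt_14 {Ω : Type*} [MeasurableSpace Ω] (P : Measure Ω) [IsProbabilityMeasure P]
    {m n : ℕ} [NeZero m] [NeZero n] (p : ℝ) (hp : 1 ≤ p)
    (x : Fin n → Ω → ℝ) (A : Fin m → Fin n → Ω → ℝ) (μp σ2 : ℝ)
    (hmx : ∀ j, Measurable (x j)) (hmA : ∀ i j, Measurable (A i j))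
    (hindep : iIndepFun
      (Sum.elim x (fun ij : Fin m × Fin n => A ij.1 ij.2)) P)
    (hident : ∀ k : Fin n ⊕ (Fin m × Fin n),
      IdentDistrib (Sum.elim x (fun ij : Fin m × Fin n => A ij.1 ij.2) k) (x 0) P P)
    (hL2 : MemLp (fun ω => |x 0 ω| ^ p) 2 P)
    (hmom : ∫ ω, |x 0 ω| ^ p ∂P = μp)
    (hvar : variance (fun ω => |x 0 ω| ^ p) P = σ2)
    (t : ℝ) (ht : 0 < t) :
    P {ω | t ≤ |(1 / ((m : ℝ) * n)) * (∑ i, ∑ j, |x j ω * A i j ω| ^ p) - μp ^ 2|}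
      ≤ ENNReal.ofReal (σ2 * (σ2 + ((m : ℝ) + 1) * μp ^ 2) / ((m : ℝ) * n * t ^ 2)) :=
  stmt_14_general P p x A μp σ2 hindep hident hL2 hmom hvar t ht
end

section
/- For every positive integer n, Σ_{w=0}^n C(n,w)·|n − 2w| = 2n·C(n−1, ⌊n/2⌋), where C(·,·) denotes the binomial coefficient. -/
/-!
Absorption and Pascal's rule give `C(n, w) (n - 2w) = n (C(n-1, w) - C(n-1, w-1))`, so the sum is
`n` times the total variation of the row `C(n-1, ·)`, padded by zeros at both ends. The row
rises to its maximum `C(n-1, ⌊n/2⌋)` and falls back, so its total variation is twice that maximum.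
-/

open Finset

theorem sum_range_abs_sub_of_unimodal {α : Type*} [AddCommGroup α] [LinearOrder α]
    [IsOrderedAddMonoid α] {g : ℕ → α} {m N : ℕ} (hmN : m ≤ N)
    (hrise : ∀ j < m, g j ≤ g (j + 1)) (hfall : ∀ j, m ≤ j → j < N → g (j + 1) ≤ g j) :
    ∑ j ∈ range N, |g (j + 1) - g j| = (g m - g 0) + (g m - g N) := by
  rw [← sum_range_add_sum_Ico _ hmN]
  have rise : ∑ j ∈ range m, |g (j + 1) - g j| = g m - g 0 := by
    rw [← sum_range_sub]
    refine sum_congr rfl fun j hj => abs_of_nonneg ?_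
    exact sub_nonneg.2 (hrise j (mem_range.1 hj))
  have fall : ∑ j ∈ Ico m N, |g (j + 1) - g j| = g m - g N := by
    rw [← neg_sub, ← sub_sub_sub_cancel_right (g N) (g m) (g 0), ← sum_range_sub, ← sum_range_sub,
      ← sum_Ico_eq_sub _ hmN, ← sum_neg_distrib]
    refine sum_congr rfl fun j hj => abs_of_nonpos ?_
    obtain ⟨hmj, hjN⟩ := mem_Ico.1 hj
    exact sub_nonpos.2 (hfall j hmj hjN)
  rw [rise, fall]

theorem Nat.choose_le_choose_succ_of_two_mul_lt {N j : ℕ} (h : 2 * j < N) :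
    N.choose j ≤ N.choose (j + 1) := by
  refine Nat.le_of_mul_le_mul_right ?_ j.succ_pos
  rw [Nat.choose_succ_right_eq]
  exact Nat.mul_le_mul_left _ (by omega)

theorem Nat.choose_succ_le_choose_of_le_two_mul_add_one {N j : ℕ} (h : N ≤ 2 * j + 1) :
    N.choose (j + 1) ≤ N.choose j := by
  refine Nat.le_of_mul_le_mul_right ?_ j.succ_pos
  rw [Nat.choose_succ_right_eq]
  exact Nat.mul_le_mul_left _ (by omega)

theorem sub_two_mul_mul_choose_succ_succ {R : Type*} [CommRing R] (N j : ℕ) :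
    ((N + 1 : R) - 2 * (j + 1)) * (N + 1).choose (j + 1)
      = (N + 1) * ((N.choose (j + 1) : R) - N.choose j) := by
  have pascal : ((N + 1).choose (j + 1) : R) = N.choose j + N.choose (j + 1) := by
    rw [Nat.choose_succ_succ', Nat.cast_add]
  have absorb : (N + 1 : R) * N.choose j = (N + 1).choose (j + 1) * (j + 1) := by
    simpa using congrArg (Nat.cast (R := R)) (Nat.add_one_mul_choose_eq N j)
  linear_combination (N + 1 : R) * pascal + 2 * absorb

theorem choose_succ_mul_abs_sub_two_mul (N j : ℕ) :
    ((N + 1).choose (j + 1) : ℤ) * |(N + 1 : ℤ) - 2 * (j + 1)|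
      = (N + 1) * |(N.choose (j + 1) : ℤ) - N.choose j| := by
  rw [← abs_of_nonneg (by positivity : (0 : ℤ) ≤ (N + 1).choose (j + 1)), ← abs_mul, mul_comm,
    sub_two_mul_mul_choose_succ_succ, abs_mul, abs_of_nonneg (by positivity : (0 : ℤ) ≤ N + 1)]

theorem stmt_15_general (n : ℕ) :
    ∑ w ∈ Finset.range (n + 1), (n.choose w : ℤ) * |(n : ℤ) - 2 * w|
      = 2 * n * ((n - 1).choose (n / 2)) := by
  rcases n with _ | N
  · simp
  have variation : ∑ j ∈ range (N + 1), |(N.choose (j + 1) : ℤ) - N.choose j|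
      = ((N.choose ((N + 1) / 2) : ℤ) - 1) + N.choose ((N + 1) / 2) := by
    rw [sum_range_abs_sub_of_unimodal (g := fun j => (N.choose j : ℤ)) (m := (N + 1) / 2) (by omega)
      (fun j hj => by exact_mod_cast Nat.choose_le_choose_succ_of_two_mul_lt (by omega))
      (fun j hj _ => by exact_mod_cast Nat.choose_succ_le_choose_of_le_two_mul_add_one (by omega))]
    simp
  rw [sum_range_succ']
  push_cast
  simp only [choose_succ_mul_abs_sub_two_mul, ← mul_sum, variation]
  simp only [Nat.choose_zero_right, Nat.cast_one, sub_zero, one_mul,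
    abs_of_nonneg (by positivity : (0 : ℤ) ≤ N + 1)]
  ring

/-- Binomial identity: `∑_{w=0}^n C(n,w) |n - 2w| = 2n C(n-1, ⌊n/2⌋)`. -/
theorem stmt_15 (n : ℕ) (hn : 0 < n) :
    ∑ w ∈ Finset.range (n + 1), (n.choose w : ℤ) * |(n : ℤ) - 2 * w|
      = 2 * n * ((n - 1).choose (n / 2)) :=
  stmt_15_general n
end
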